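/- arXiv:1712.03851 — 4 statements merged into one kernel-verified Lean document; each statement's English description precedes it below -/
import Mathlib

section
/- Let g ≥ 1 and let x_1 < x_2 < … < x_n be real numbers (n > 0). A sequence s = (s_1,…,s_n) with each s_i ∈ {−1,0,1} is the sequence of signs of some non-zero real solution h = (h_1,…,h_n) of the dual Vandermonde system ∑_{i=1}^n x_i^k h_i = 0 (k = 0,…,g−1) (i.e. sign(h_i) = s_i for all i) if and only if ch(s) ≥ g. -/
/-- The number of sign changes of a finite sequence `h : Fin n → ℝ`:
the number of pairs `i < j` with `h i * h j < 0` and `h k = 0` for all `i < k < j`. -/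
noncomputable def signChanges {n : ℕ} (h : Fin n → ℝ) : ℕ :=
  Set.ncard {p : Fin n × Fin n | p.1 < p.2 ∧ h p.1 * h p.2 < 0 ∧
    ∀ k : Fin n, p.1 < k → k < p.2 → h k = 0}

/-!
Necessity: if `s` has `c < g` sign changes, put a point `y` strictly between the two ends of
each sign change. Up to a constant factor, `Q = ∏ (y - X)` has degree `c < g` and the sign of
`s` at every nonzero entry, so `∑ i, h i * Q (x i)` is positive, while the moment equations
make it `0`.

Sufficiency: the nonzero entries of `s` form `c + 1 ≥ g + 1` consecutive blocks of constant,
alternating sign. For nodes `ζ 0 < ⋯ < ζ g` taken from `g + 1` consecutive blocks, the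
divided-difference weights `1 / ∏_{r ≠ t} (ζ r - ζ t)` annihilate every power below `g` and
alternate in sign. Summing such a weight vector over one chain through each nonzero entry gives
a solution whose sign pattern is exactly `s`.
-/

open Finset Polynomial Function
open scoped Classical

lemma neg_one_pow_mul_self (k : ℕ) : ((-1 : ℝ) ^ k) * (-1) ^ k = 1 := by
  rw [← mul_pow]; norm_num

lemma mul_mul_pos_of_neg_one_pow {σ a b : ℝ} {k : ℕ} (ha : 0 < σ * ((-1) ^ k * a))
    (hb : 0 < (-1) ^ k * b) : 0 < a * (σ * b) := by
  calc 0 < σ * ((-1) ^ k * a) * ((-1) ^ k * b) := mul_pos ha hb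
    _ = a * (σ * b) := by linear_combination a * σ * b * neg_one_pow_mul_self k

lemma pos_of_mul_pos_of_mul_pos {a b c : ℝ} (hab : 0 < a * b) (hbc : 0 < b * c) : 0 < a * c := by
  have : 0 < a * c * (b * b) := by nlinarith [mul_pos hab hbc]
  exact pos_of_mul_pos_left this (mul_self_nonneg b)

lemma Real.sign_eq_sign_of_mul_pos {a b : ℝ} (h : 0 < a * b) : Real.sign a = Real.sign b := by
  rcases mul_pos_iff.mp h with ⟨ha, hb⟩ | ⟨ha, hb⟩
  · rw [Real.sign_of_pos ha, Real.sign_of_pos hb]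
  · rw [Real.sign_of_neg ha, Real.sign_of_neg hb]

lemma Real.sign_mul_sign_neg_iff {a b : ℝ} : Real.sign a * Real.sign b < 0 ↔ a * b < 0 := by
  rcases lt_trichotomy a 0 with ha | rfl | ha <;> rcases lt_trichotomy b 0 with hb | rfl | hb <;>
    simp only [Real.sign_of_pos, Real.sign_of_neg, Real.sign_zero, *] <;>
    constructor <;> intro h <;> nlinarith

lemma neg_one_pow_card_filter_mul_prod_pos {ι : Type*} (A : Finset ι) (f : ι → ℝ)
    (p : ι → Prop) [DecidablePred p] (hneg : ∀ i ∈ A, p i → f i < 0)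
    (hpos : ∀ i ∈ A, ¬ p i → 0 < f i) : 0 < (-1) ^ #{i ∈ A | p i} * ∏ i ∈ A, f i := by
  rw [← prod_filter_mul_prod_filter_not A p, ← mul_assoc, ← prod_neg]
  refine mul_pos (prod_pos fun i hi => ?_) (prod_pos fun i hi => ?_)
  · rw [mem_filter] at hi
    exact neg_pos.mpr (hneg i hi.1 hi.2)
  · rw [mem_filter] at hi
    exact hpos i hi.1 hi.2

lemma sum_mul_eval_eq_zero {ι : Type*} [Fintype ι] {x h : ι → ℝ} {g : ℕ}
    (hmom : ∀ k, k < g → ∑ i, x i ^ k * h i = 0) {Q : ℝ[X]} (hQ : Q.natDegree < g) :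
    ∑ i, h i * Q.eval (x i) = 0 := by
  simp_rw [eval_eq_sum_range, mul_sum]
  rw [sum_comm]
  refine sum_eq_zero fun k hk => ?_
  rw [← mul_zero (Q.coeff k), ← hmom k (by rw [mem_range] at hk; omega), mul_sum]
  exact sum_congr rfl fun i _ => by ring

lemma exists_alternating_moments_eq_zero {m : ℕ} {ζ : Fin (m + 1) → ℝ}
    (hζ : StrictMono ζ) :
    ∃ w : Fin (m + 1) → ℝ, (∀ k, k < m → ∑ t, ζ t ^ k * w t = 0) ∧
      ∀ t : Fin (m + 1), 0 < (-1) ^ (t : ℕ) * w t := by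
  refine ⟨fun t => (∏ r ∈ univ.erase t, (ζ r - ζ t))⁻¹, fun k hk => ?_, fun t => ?_⟩
  · have h := Lagrange.coeff_eq_sum (s := univ) hζ.injective.injOn (P := X ^ k)
      (by rw [degree_X_pow, card_univ, Fintype.card_fin]; exact_mod_cast hk.trans m.lt_succ_self)
    simp only [card_univ, Fintype.card_fin, add_tsub_cancel_right, coeff_X_pow, hk.ne',
      if_false, eval_pow, eval_X] at h
    have hprod : ∀ t, ∏ r ∈ univ.erase t, (ζ r - ζ t) =
        (-1) ^ m * ∏ r ∈ univ.erase t, (ζ t - ζ r) := fun t => by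
      simp only [← neg_sub (ζ t), prod_neg, card_erase_of_mem (mem_univ t), card_univ,
        Fintype.card_fin, add_tsub_cancel_right]
    calc ∑ t, ζ t ^ k * (∏ r ∈ univ.erase t, (ζ r - ζ t))⁻¹
        = (-1) ^ m * ∑ t, ζ t ^ k / ∏ r ∈ univ.erase t, (ζ t - ζ r) := by
          rw [mul_sum]
          refine sum_congr rfl fun t _ => ?_
          rw [hprod, mul_inv, ← inv_pow, inv_neg_one, div_eq_mul_inv]
          ring
      _ = 0 := by rw [← h, mul_zero]
  · have hsign := neg_one_pow_card_filter_mul_prod_pos (univ.erase t) (fun r => ζ r - ζ t)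
      (· < t) (fun r _ hr => sub_neg.mpr (hζ hr))
      (fun r hr hr' => sub_pos.mpr (hζ (lt_of_le_of_ne (not_lt.mp hr') (ne_of_mem_erase hr).symm)))
    have hcard : #{r ∈ univ.erase t | r < t} = t := by
      rw [← Fin.card_Iio t]
      congr 1
      ext r
      simp only [mem_filter, mem_erase, mem_univ, mem_Iio, and_true]
      omega
    rw [hcard] at hsign
    exact div_pos_iff.mpr (mul_pos_iff.mp hsign)

lemma exists_moments_eq_zero_of_alternating_chain {ι : Type*} [Fintype ι] {g : ℕ}
    {x s : ι → ℝ} {z : Fin (g + 1) → ι} (hz : StrictMono (x ∘ z)) {σ : ℝ}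
    (hσ : ∀ t : Fin (g + 1), 0 < σ * ((-1) ^ (t : ℕ) * s (z t))) :
    ∃ u : ι → ℝ, (∀ k, k < g → ∑ i, x i ^ k * u i = 0) ∧
      (∀ i, u i = 0 ∨ 0 < s i * u i) ∧ ∀ t, 0 < s (z t) * u (z t) := by
  obtain ⟨w, hmom, hw⟩ := exists_alternating_moments_eq_zero hz
  have hzinj : Injective z := hz.injective.of_comp
  have hpos : ∀ t, 0 < s (z t) * extend z (fun t => σ * w t) 0 (z t) := fun t => by
    rw [hzinj.extend_apply]
    exact mul_mul_pos_of_neg_one_pow (hσ t) (hw t)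
  refine ⟨extend z (fun t => σ * w t) 0, fun k hk => ?_, fun i => ?_, hpos⟩
  · rw [← Fintype.sum_of_injective z hzinj (fun t => x (z t) ^ k * (σ * w t)) _
      (fun i hi => by rw [extend_apply' _ _ _ hi, Pi.zero_apply, mul_zero])
      (fun t => by rw [hzinj.extend_apply])]
    simp_rw [mul_left_comm _ σ, ← mul_sum]
    exact mul_eq_zero_of_right σ (hmom k hk)
  · by_cases hi : ∃ t, z t = i
    · obtain ⟨t, rfl⟩ := hi
      exact Or.inr (hpos t)
    · exact Or.inl (by rw [extend_apply' _ _ _ hi, Pi.zero_apply])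

section SignChanges

variable {n : ℕ} {s : Fin n → ℝ}

def IsSignChange (s : Fin n → ℝ) (i j : Fin n) : Prop :=
  i < j ∧ s i * s j < 0 ∧ ∀ k, i < k → k < j → s k = 0

noncomputable def signChangeStarts (s : Fin n → ℝ) : Finset (Fin n) :=
  {i | ∃ j, IsSignChange s i j}

-- On the nonzero entries of `s`, the index of the block of constant sign containing `j`.
noncomputable def signChangesBefore (s : Fin n → ℝ) (j : Fin n) : ℕ :=
  #{f ∈ signChangeStarts s | f < j}

lemma mem_signChangeStarts {i : Fin n} :
    i ∈ signChangeStarts s ↔ ∃ j, IsSignChange s i j := by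
  simp [signChangeStarts]

namespace IsSignChange

variable {i j : Fin n}

lemma left_ne_zero (h : IsSignChange s i j) : s i ≠ 0 := fun h0 => by
  simpa [h0] using h.2.1

lemma right_ne_zero (h : IsSignChange s i j) : s j ≠ 0 := fun h0 => by
  simpa [h0] using h.2.1

lemma le_of_lt_of_ne_zero (h : IsSignChange s i j) {k : Fin n} (hik : i < k) (hk : s k ≠ 0) :
    j ≤ k :=
  not_lt.mp fun hkj => hk (h.2.2 k hik hkj)

lemma right_unique (h : IsSignChange s i j) {j' : Fin n} (h' : IsSignChange s i j') : j = j' :=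
  le_antisymm (h.le_of_lt_of_ne_zero h'.1 h'.right_ne_zero)
    (h'.le_of_lt_of_ne_zero h.1 h.right_ne_zero)

end IsSignChange

lemma ne_zero_of_mem_signChangeStarts {f : Fin n} (hf : f ∈ signChangeStarts s) : s f ≠ 0 := by
  obtain ⟨j, hj⟩ := mem_signChangeStarts.mp hf
  exact hj.left_ne_zero

lemma signChanges_eq_card_signChangeStarts : signChanges s = #(signChangeStarts s) := by
  have hinj : Set.InjOn Prod.fst {p : Fin n × Fin n | IsSignChange s p.1 p.2} := by
    rintro ⟨i, j⟩ hij ⟨i', j'⟩ hij' (rfl : i = i')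
    exact Prod.ext rfl (hij.right_unique hij')
  have himage : Prod.fst '' {p : Fin n × Fin n | IsSignChange s p.1 p.2} = signChangeStarts s := by
    ext i
    simp [signChangeStarts]
  rw [← Set.ncard_coe_finset, ← himage, hinj.ncard_image]
  rfl

lemma signChanges_sign_comp (h : Fin n → ℝ) :
    signChanges (fun i => Real.sign (h i)) = signChanges h := by
  simp only [signChanges, Real.sign_mul_sign_neg_iff, Real.sign_eq_zero_iff]

lemma signChanges_zero : signChanges (0 : Fin n → ℝ) = 0 := by
  simp [signChanges]

lemma signChangesBefore_mono : Monotone (signChangesBefore s) := fun _ _ hjk =>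
  card_le_card fun _ hf => by
    rw [mem_filter] at hf ⊢
    exact ⟨hf.1, hf.2.trans_le hjk⟩

lemma signChangesBefore_le (j : Fin n) : signChangesBefore s j ≤ signChanges s :=
  signChanges_eq_card_signChangeStarts ▸ card_filter_le _ _

lemma signChangesBefore_lt_of_mem {f : Fin n} (hf : f ∈ signChangeStarts s) :
    signChangesBefore s f < signChanges s := by
  rw [signChanges_eq_card_signChangeStarts]
  exact card_lt_card (filter_ssubset.mpr ⟨f, hf, lt_irrefl f⟩)

lemma signChangesBefore_strictMonoOn : StrictMonoOn (signChangesBefore s) (signChangeStarts s) := by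
  intro f hf f' _ hff'
  refine card_lt_card ((ssubset_iff_of_subset fun e he => ?_).mpr ⟨f, ?_, ?_⟩)
  · rw [mem_filter] at he ⊢
    exact ⟨he.1, he.2.trans hff'⟩
  · exact mem_filter.mpr ⟨hf, hff'⟩
  · simp

lemma mul_pos_of_consecutive_ne_zero {a b : Fin n} (hab : a < b) (ha : s a ≠ 0) (hb : s b ≠ 0)
    (hzero : ∀ k, a < k → k < b → s k = 0) :
    0 < (-1) ^ signChangesBefore s a * s a * ((-1) ^ signChangesBefore s b * s b) := by
  have hbelow : ∀ f ∈ signChangeStarts s, f < b ↔ f ≤ a := fun f hf =>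
    ⟨fun hfb => not_lt.mp fun haf => ne_zero_of_mem_signChangeStarts hf (hzero f haf hfb),
      fun hfa => hfa.trans_lt hab⟩
  have hstart : a ∈ signChangeStarts s ↔ s a * s b < 0 := by
    refine ⟨fun h => ?_, fun h => mem_signChangeStarts.mpr ⟨b, hab, h, hzero⟩⟩
    obtain ⟨p, hp⟩ := mem_signChangeStarts.mp h
    obtain rfl : p = b := le_antisymm (hp.le_of_lt_of_ne_zero hab hb)
      (not_lt.mp fun hpb => hp.right_ne_zero (hzero p hp.1 hpb))
    exact hp.2.1
  have hsq := neg_one_pow_mul_self (signChangesBefore s a)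
  by_cases hneg : s a * s b < 0
  · have hcount : signChangesBefore s b = signChangesBefore s a + 1 := by
      rw [signChangesBefore, signChangesBefore,
        ← card_insert_of_notMem (s := {f ∈ signChangeStarts s | f < a}) (a := a) (by simp)]
      congr 1
      ext f
      simp only [mem_filter, mem_insert]
      grind
    rw [hcount, pow_succ]
    calc 0 < -(s a * s b) := neg_pos.mpr hneg
      _ = _ := by linear_combination (s a * s b) * hsq
  · have hcount : signChangesBefore s b = signChangesBefore s a := by
      rw [signChangesBefore, signChangesBefore]
      congr 1
      ext f
      simp only [mem_filter]
      grind
    rw [hcount]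
    calc 0 < s a * s b := lt_of_le_of_ne (not_lt.mp hneg) (mul_ne_zero ha hb).symm
      _ = _ := by linear_combination -(s a * s b) * hsq

-- The sign of `s` flips between consecutive nonzero entries exactly when `signChangesBefore`
-- increases, which it does by one.
lemma exists_const_sign_neg_one_pow_signChangesBefore_mul :
    ∃ σ : ℝ, ∀ j, s j ≠ 0 → 0 < σ * ((-1) ^ signChangesBefore s j * s j) := by
  by_cases hsupp : ∃ j, s j ≠ 0
  swap
  · exact ⟨0, fun j hj => (hsupp ⟨j, hj⟩).elim⟩
  obtain ⟨j₀, hj₀⟩ := hsupp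
  obtain ⟨a, ha, hmin⟩ := ({j | s j ≠ 0} : Finset (Fin n)).exists_min_image id
    ⟨j₀, by simpa using hj₀⟩
  simp only [mem_filter, mem_univ, true_and, id] at ha hmin
  refine ⟨(-1) ^ signChangesBefore s a * s a, fun b => ?_⟩
  induction b using WellFoundedLT.induction with
  | _ b ih =>
    intro hb
    rcases (hmin b hb).eq_or_lt with rfl | hab
    · exact mul_self_pos.mpr (mul_ne_zero (pow_ne_zero _ (by norm_num)) ha)
    have hne : ({k | a ≤ k ∧ k < b ∧ s k ≠ 0} : Finset (Fin n)).Nonempty :=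
      ⟨a, by simp [hab, ha]⟩
    obtain ⟨b', hb', hmax⟩ := exists_max_image _ id hne
    simp only [mem_filter, mem_univ, true_and, id] at hb' hmax
    refine pos_of_mul_pos_of_mul_pos (ih b' hb'.2.1 hb'.2.2)
      (mul_pos_of_consecutive_ne_zero hb'.2.1 hb'.2.2 hb fun k hb'k hkb => ?_)
    by_contra hk
    exact (hmax k ⟨hb'.1.trans hb'k.le, hkb, hk⟩).not_gt hb'k

lemma exists_signChangesBefore_eq {j₀ : Fin n} (hj₀ : s j₀ ≠ 0) {m : ℕ}
    (hm : m ≤ signChanges s) : ∃ j, s j ≠ 0 ∧ signChangesBefore s j = m := by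
  rcases hm.lt_or_eq with hm | rfl
  · obtain ⟨f, hf, rfl⟩ := surjOn_of_injOn_of_card_le (signChangesBefore s)
      (fun f hf => mem_range.mpr (signChangesBefore_lt_of_mem hf))
      signChangesBefore_strictMonoOn.injOn
      (by rw [card_range, signChanges_eq_card_signChangeStarts]) (mem_range.mpr hm)
    exact ⟨f, ne_zero_of_mem_signChangeStarts hf, rfl⟩
  have hne : ({j | s j ≠ 0} : Finset (Fin n)).Nonempty := ⟨j₀, by simpa using hj₀⟩
  refine ⟨_, by simpa using max'_mem _ hne, ?_⟩
  rw [signChangesBefore, filter_true_of_mem, signChanges_eq_card_signChangeStarts]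
  intro f hf
  obtain ⟨p, hp⟩ := mem_signChangeStarts.mp hf
  exact hp.1.trans_le (le_max' _ p (by simpa using hp.right_ne_zero))

lemma exists_alternating_chain {g : ℕ} (hg : g ≤ signChanges s) {j : Fin n} (hj : s j ≠ 0) :
    ∃ z : Fin (g + 1) → Fin n, StrictMono z ∧ j ∈ Set.range z ∧
      ∃ σ : ℝ, ∀ t : Fin (g + 1), 0 < σ * ((-1) ^ (t : ℕ) * s (z t)) := by
  obtain ⟨σ, hσ⟩ := exists_const_sign_neg_one_pow_signChangesBefore_mul (s := s)
  have : Nonempty (Fin n) := ⟨j⟩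
  choose! ρ hρ using fun m (hm : m ≤ signChanges s) => exists_signChangesBefore_eq hj hm
  have hj_le := signChangesBefore_le (s := s) j
  set a := min (signChangesBefore s j) (signChanges s - g)
  set z : Fin (g + 1) → Fin n := fun t =>
    if a + t = signChangesBefore s j then j else ρ (a + t)
  have hz : ∀ t : Fin (g + 1), s (z t) ≠ 0 ∧ signChangesBefore s (z t) = a + t := by
    intro t
    by_cases h : a + t = signChangesBefore s j
    · simp [z, h, hj]
    · simpa [z, h] using hρ (a + t) (by omega)
  refine ⟨z, fun t t' htt' => (signChangesBefore_mono (s := s)).reflect_lt ?_,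
    ⟨⟨signChangesBefore s j - a, by omega⟩, by simp only [ite_eq_left_iff, z]; omega⟩,
    σ * (-1) ^ a, fun t => ?_⟩
  · rw [(hz t).2, (hz t').2]
    simpa using htt'
  · convert hσ (z t) (hz t).1 using 1
    rw [(hz t).2, pow_add]
    ring

lemma exists_between_of_mem_signChangeStarts {x : Fin n → ℝ} (hx : StrictMono x)
    {f : Fin n} (hf : f ∈ signChangeStarts s) :
    ∃ y, x f < y ∧ ∀ j, f < j → s j ≠ 0 → y < x j := by
  obtain ⟨p, hp⟩ := mem_signChangeStarts.mp hf
  have hxfp := hx hp.1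
  refine ⟨(x f + x p) / 2, by linarith, fun j hfj hj => ?_⟩
  have := hx.monotone (hp.le_of_lt_of_ne_zero hfj hj)
  linarith

lemma exists_polynomial_pos_on_support {x : Fin n → ℝ} (hx : StrictMono x) :
    ∃ Q : ℝ[X], Q.natDegree ≤ signChanges s ∧
      ∀ j, s j ≠ 0 → 0 < s j * Q.eval (x j) := by
  obtain ⟨σ, hσ⟩ := exists_const_sign_neg_one_pow_signChangesBefore_mul (s := s)
  choose! y hy using fun f (hf : f ∈ signChangeStarts s) =>
    exists_between_of_mem_signChangeStarts hx hf
  refine ⟨C σ * ∏ f ∈ signChangeStarts s, (C (y f) - X), ?_, fun j hj => ?_⟩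
  · rw [signChanges_eq_card_signChangeStarts]
    refine (natDegree_C_mul_le _ _).trans ((natDegree_prod_le _ _).trans ?_)
    exact (sum_le_card_nsmul _ _ 1 fun f _ => by compute_degree).trans (by simp)
  · rw [eval_mul, eval_C, eval_prod]
    simp only [eval_sub, eval_C, eval_X]
    refine mul_mul_pos_of_neg_one_pow (hσ j hj)
      (neg_one_pow_card_filter_mul_prod_pos _ _ (· < j) (fun f hf hfj => ?_) fun f hf hfj => ?_)
    · linarith [(hy f hf).2 j hfj hj]
    · linarith [(hy f hf).1, hx.monotone (not_lt.mp hfj)]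

lemma le_signChanges_of_moments_eq_zero {g : ℕ} {x h : Fin n → ℝ} (hx : StrictMono x)
    (hne : h ≠ 0) (hmom : ∀ k, k < g → ∑ i, x i ^ k * h i = 0) : g ≤ signChanges h := by
  obtain ⟨Q, hQdeg, hQpos⟩ := exists_polynomial_pos_on_support (s := h) hx
  by_contra hlt
  have hzero := sum_mul_eval_eq_zero hmom (Q := Q) (by omega)
  obtain ⟨i, hi⟩ := Function.ne_iff.mp hne
  have hpos : 0 < ∑ i, h i * Q.eval (x i) := by
    refine sum_pos' (fun j _ => ?_) ⟨i, mem_univ i, hQpos i hi⟩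
    by_cases hj : h j = 0
    · simp [hj]
    · exact (hQpos j hj).le
  exact hpos.ne' hzero

lemma exists_moments_eq_zero_sign_eq_of_le_signChanges {g : ℕ} {x : Fin n → ℝ}
    (hx : StrictMono x) (hg : g ≤ signChanges s) :
    ∃ h : Fin n → ℝ, (∀ k, k < g → ∑ i, x i ^ k * h i = 0) ∧
      ∀ i, Real.sign (h i) = Real.sign (s i) := by
  have hvec : ∀ j : {j // s j ≠ 0}, ∃ u : Fin n → ℝ,
      (∀ k, k < g → ∑ i, x i ^ k * u i = 0) ∧ (∀ i, u i = 0 ∨ 0 < s i * u i) ∧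
        0 < s j * u j := by
    rintro ⟨j, hj⟩
    obtain ⟨z, hz, ⟨t, rfl⟩, σ, hσ⟩ := exists_alternating_chain hg hj
    obtain ⟨u, hmom, hconf, hpos⟩ :=
      exists_moments_eq_zero_of_alternating_chain (hx.comp hz) hσ
    exact ⟨u, hmom, hconf, hpos t⟩
  choose u hmom hconf hpos using hvec
  refine ⟨∑ j, u j, fun k hk => ?_, fun i => ?_⟩
  · simp_rw [Finset.sum_apply, mul_sum]
    rw [sum_comm]
    exact sum_eq_zero fun j _ => hmom j k hk
  by_cases hi : s i = 0
  · have hu : ∀ j, u j i = 0 := fun j => (hconf j i).resolve_right (by simp [hi])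
    simp [Finset.sum_apply, hu, hi]
  · refine Real.sign_eq_sign_of_mul_pos (mul_comm (s i) _ ▸ ?_)
    rw [Finset.sum_apply, mul_sum]
    refine sum_pos' (fun j _ => ?_) ⟨⟨i, hi⟩, mem_univ _, hpos ⟨i, hi⟩⟩
    rcases hconf j i with h0 | h0
    · simp [h0]
    · exact h0.le

end SignChanges

theorem signs_of_nonzero_solution_iff_general (g n : ℕ) (hg : 1 ≤ g)
    (x : Fin n → ℝ) (hx : StrictMono x)
    (s : Fin n → ℝ) (hs : ∀ i, s i = -1 ∨ s i = 0 ∨ s i = 1) :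
    (∃ h : Fin n → ℝ, h ≠ 0 ∧ (∀ k, k < g → ∑ i, x i ^ k * h i = 0) ∧
      ∀ i, Real.sign (h i) = s i) ↔ g ≤ signChanges s := by
  constructor
  · rintro ⟨h, hne, hmom, hsign⟩
    obtain rfl : s = fun i => Real.sign (h i) := funext fun i => (hsign i).symm
    rw [signChanges_sign_comp]
    exact le_signChanges_of_moments_eq_zero hx hne hmom
  · intro hc
    obtain ⟨h, hmom, hsign⟩ := exists_moments_eq_zero_sign_eq_of_le_signChanges hx hc
    have hsign' : ∀ i, Real.sign (h i) = s i := fun i => by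
      rcases hs i with hi | hi | hi <;> simp [hsign, hi, Real.sign_neg]
    refine ⟨h, ?_, hmom, hsign'⟩
    rintro rfl
    obtain rfl : s = 0 := funext fun i => by simp [← hsign' i]
    rw [signChanges_zero] at hc
    omega

/-- A sequence `s` with entries in `{-1,0,1}` is the sequence of signs of a nonzero
solution of the dual Vandermonde system iff `ch(s) ≥ g`. -/
theorem signs_of_nonzero_solution_iff (g n : ℕ) (hg : 1 ≤ g) (hn : 0 < n)
    (x : Fin n → ℝ) (hx : StrictMono x)
    (s : Fin n → ℝ) (hs : ∀ i, s i = -1 ∨ s i = 0 ∨ s i = 1) :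
    (∃ h : Fin n → ℝ, h ≠ 0 ∧ (∀ k, k < g → ∑ i, x i ^ k * h i = 0) ∧
      ∀ i, Real.sign (h i) = s i) ↔ g ≤ signChanges s :=
  signs_of_nonzero_solution_iff_general g n hg x hx s hs
end

section
/- Let g ≥ 1 and let x_1 < x_2 < … < x_n be real numbers. If h = (h_1,…,h_n) is a non-zero real solution of the dual Vandermonde system ∑_{i=1}^n x_i^k h_i = 0 (k = 0,…,g−1), then ch(h) ≥ g. -/
open Polynomial in
/-- A nonzero solution of the dual Vandermonde system has at least `g` sign changes. -/
theorem signChanges_ge_of_nonzero_solution (g n : ℕ) (hg : 1 ≤ g)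
    (x : Fin n → ℝ) (hx : StrictMono x)
    (h : Fin n → ℝ) (hne : h ≠ 0)
    (hsys : ∀ k, k < g → ∑ i, x i ^ k * h i = 0) :
    g ≤ signChanges h := by
  classical
  by_contra hcon
  push_neg at hcon
  set T : Set (Fin n × Fin n) := {p : Fin n × Fin n | p.1 < p.2 ∧ h p.1 * h p.2 < 0 ∧
    ∀ k : Fin n, p.1 < k → k < p.2 → h k = 0} with hTdef
  have hTfin : T.Finite := Set.toFinite T
  have hcard : hTfin.toFinset.card = signChanges h := by
    rw [signChanges, Set.ncard_eq_toFinset_card _ hTfin]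
  set m : Fin n × Fin n → ℝ := fun p => (x p.1 + x p.2) / 2 with hm
  have hm1 : ∀ p ∈ T, x p.1 < m p := by
    intro p hp
    have := hx hp.1
    simp only [hm]; linarith
  have hm2 : ∀ p ∈ T, m p < x p.2 := by
    intro p hp
    have := hx hp.1
    simp only [hm]; linarith
  set q : Polynomial ℝ := ∏ p ∈ hTfin.toFinset, (X - C (m p)) with hq
  have hdeg : q.natDegree < g := by
    rw [hq, Polynomial.natDegree_prod_of_monic _ _ (fun p _ => monic_X_sub_C _)]
    simp only [natDegree_X_sub_C, Finset.sum_const, smul_eq_mul, mul_one]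
    rw [hcard]; exact hcon
  set E : Fin n → ℝ := fun i => q.eval (x i) with hE
  have hsum : ∑ i, E i * h i = 0 := by
    have hev : ∀ i, E i = ∑ k ∈ Finset.range g, q.coeff k * x i ^ k := by
      intro i
      simp only [hE]
      exact Polynomial.eval_eq_sum_range' hdeg (x i)
    calc ∑ i, E i * h i
        = ∑ i, ∑ k ∈ Finset.range g, q.coeff k * x i ^ k * h i := by
          simp_rw [hev, Finset.sum_mul]
      _ = ∑ k ∈ Finset.range g, q.coeff k * ∑ i, x i ^ k * h i := by
          rw [Finset.sum_comm]
          refine Finset.sum_congr rfl fun k _ => ?_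
          rw [Finset.mul_sum]
          exact Finset.sum_congr rfl fun i _ => by ring
      _ = 0 := Finset.sum_eq_zero fun k hk => by
          rw [hsys k (Finset.mem_range.mp hk), mul_zero]
  have hEprod : ∀ i, E i = ∏ p ∈ hTfin.toFinset, (x i - m p) := by
    intro i; simp [hE, hq, Polynomial.eval_prod]
  have factA : ∀ i, h i ≠ 0 → E i ≠ 0 := by
    intro i hi
    rw [hEprod]
    refine Finset.prod_ne_zero_iff.mpr fun p hp => ?_
    have hpT : p ∈ T := hTfin.mem_toFinset.mp hp
    intro h0
    have hxm : x i = m p := sub_eq_zero.mp h0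
    have h1 : x p.1 < x i := by rw [hxm]; exact hm1 p hpT
    have h2 : x i < x p.2 := by rw [hxm]; exact hm2 p hpT
    exact hi (hpT.2.2 i (hx.lt_iff_lt.mp h1) (hx.lt_iff_lt.mp h2))
  have factB : ∀ p ∈ T, ∀ i j : Fin n, i < j → h i ≠ 0 → h j ≠ 0 →
      (∀ k, i < k → k < j → h k = 0) → p ≠ (i, j) → p.2 ≤ i ∨ j ≤ p.1 := by
    intro p hp i j hij hi hj hmid hne'
    obtain ⟨h12, hneg, hz⟩ := hp
    have hp1 : h p.1 ≠ 0 := fun h0 => by simp [h0] at hneg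
    have hp2 : h p.2 ≠ 0 := fun h0 => by simp [h0] at hneg
    by_contra hc
    push_neg at hc
    obtain ⟨hc1, hc2⟩ := hc
    rcases lt_trichotomy p.1 i with h1 | h1 | h1
    · exact hi (hz i h1 hc1)
    · rcases lt_trichotomy p.2 j with h2 | h2 | h2
      · exact hp2 (hmid p.2 (h1 ▸ h12) h2)
      · exact hne' (Prod.ext h1 h2)
      · exact hj (hz j (h1 ▸ hij) h2)
    · exact hp1 (hmid p.1 h1 hc2)
  have factC : ∀ i j : Fin n, i < j → h i ≠ 0 → h j ≠ 0 →
      (∀ k, i < k → k < j → h k = 0) → 0 < (E i * h i) * (E j * h j) := by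
    intro i j hij hi hj hmid
    have key : ∀ p ∈ hTfin.toFinset, p ≠ (i, j) → 0 < (x i - m p) * (x j - m p) := by
      intro p hp hne'
      have hpT := hTfin.mem_toFinset.mp hp
      rcases factB p hpT i j hij hi hj hmid hne' with hle | hle
      · have h1 : m p < x i := lt_of_lt_of_le (hm2 p hpT) (hx.monotone hle)
        have h2 : m p < x j := lt_trans h1 (hx hij)
        nlinarith
      · have h1 : x j < m p := lt_of_le_of_lt (hx.monotone hle) (hm1 p hpT)
        have h2 : x i < m p := lt_trans (hx hij) h1
        nlinarith
    have hEE : E i * E j = ∏ p ∈ hTfin.toFinset, (x i - m p) * (x j - m p) := by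
      rw [hEprod, hEprod, ← Finset.prod_mul_distrib]
    have hhij : h i * h j ≠ 0 := mul_ne_zero hi hj
    rcases hhij.lt_or_gt with hneg | hpos
    · -- (i,j) is a sign change pair
      have hmemT : (i, j) ∈ T := ⟨hij, hneg, hmid⟩
      have hmem : (i, j) ∈ hTfin.toFinset := hTfin.mem_toFinset.mpr hmemT
      have hfac : (x i - m (i, j)) * (x j - m (i, j)) < 0 := by
        have h1 : x i < m (i, j) := hm1 (i, j) hmemT
        have h2 : m (i, j) < x j := hm2 (i, j) hmemT
        nlinarith
      have hrest : 0 < ∏ p ∈ (hTfin.toFinset).erase (i, j), (x i - m p) * (x j - m p) := by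
        refine Finset.prod_pos fun p hp => ?_
        exact key p (Finset.mem_of_mem_erase hp) (Finset.ne_of_mem_erase hp)
      have hEEneg : E i * E j < 0 := by
        rw [hEE, ← Finset.mul_prod_erase _ _ hmem]
        exact mul_neg_of_neg_of_pos hfac hrest
      have h3 : (E i * h i) * (E j * h j) = (E i * E j) * (h i * h j) := by ring
      rw [h3]
      exact mul_pos_of_neg_of_neg hEEneg hneg
    · have hnotmem : ∀ p ∈ hTfin.toFinset, p ≠ (i, j) := by
        intro p hp h0
        have hpT := hTfin.mem_toFinset.mp hp
        rw [h0] at hpT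
        exact absurd hpT.2.1 (not_lt.mpr (le_of_lt hpos))
      have hEEpos : 0 < E i * E j := by
        rw [hEE]
        exact Finset.prod_pos fun p hp => key p hp (hnotmem p hp)
      have h3 : (E i * h i) * (E j * h j) = (E i * E j) * (h i * h j) := by ring
      rw [h3]
      exact mul_pos hEEpos hpos
  have factD : ∀ d : ℕ, ∀ i j : Fin n, j.val - i.val = d → i < j → h i ≠ 0 → h j ≠ 0 →
      0 < (E i * h i) * (E j * h j) := by
    intro d
    induction d using Nat.strong_induction_on with
    | _ d ih =>
      intro i j hd hij hi hj
      by_cases hmid : ∀ k, i < k → k < j → h k = 0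
      · exact factC i j hij hi hj hmid
      · push_neg at hmid
        obtain ⟨k, hik, hkj, hk⟩ := hmid
        have hik' : i.val < k.val := hik
        have hkj' : k.val < j.val := hkj
        have h1 := ih (k.val - i.val) (by omega) i k rfl hik hi hk
        have h2 := ih (j.val - k.val) (by omega) k j rfl hkj hk hj
        have hk2 : 0 < (E k * h k) * (E k * h k) :=
          mul_self_pos.mpr (mul_ne_zero (factA k hk) hk)
        nlinarith [mul_pos h1 h2]
  obtain ⟨i0, hi0⟩ := Function.ne_iff.mp hne
  have hterm : ∀ i, 0 ≤ (E i * h i) * (E i0 * h i0) := by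
    intro i
    by_cases hhi : h i = 0
    · simp [hhi]
    · rcases lt_trichotomy i i0 with hlt | heq | hgt
      · exact le_of_lt (factD _ i i0 rfl hlt hhi hi0)
      · subst heq
        exact le_of_lt (mul_self_pos.mpr (mul_ne_zero (factA i hhi) hhi))
      · rw [mul_comm]
        exact le_of_lt (factD _ i0 i rfl hgt hi0 hhi)
  have hposum : 0 < ∑ i, (E i * h i) * (E i0 * h i0) := by
    refine Finset.sum_pos' (fun i _ => hterm i) ⟨i0, Finset.mem_univ _, ?_⟩
    exact mul_self_pos.mpr (mul_ne_zero (factA i0 hi0) hi0)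
  have hzero : ∑ i, (E i * h i) * (E i0 * h i0) = 0 := by
    rw [← Finset.sum_mul, hsum, zero_mul]
  linarith
end

section
/- Let g ≥ 1, let x_1 < x_2 < … < x_n be real numbers, and let h = (h_1,…,h_n) be a sequence of real numbers with ch(h) < g. Then there exists a real polynomial F of degree less than g such that F(x_i) ≠ 0 and h_i·F(x_i) ≥ 0 for every i = 1,…,n. -/
namespace SignChangesAux

/-- The set of sign-change pairs. -/
def S {n : ℕ} (h : Fin n → ℝ) : Set (Fin n × Fin n) :=
  {p | p.1 < p.2 ∧ h p.1 * h p.2 < 0 ∧ ∀ k : Fin n, p.1 < k → k < p.2 → h k = 0}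

lemma signChanges_eq {n : ℕ} (h : Fin n → ℝ) : signChanges h = (S h).ncard := rfl

/-- If two entries have opposite signs, there is a sign-change pair between them. -/
lemma exists_pair {n : ℕ} (h : Fin n → ℝ) :
    ∀ d : ℕ, ∀ i j : Fin n, (j : ℕ) - (i : ℕ) ≤ d → i < j → h i * h j < 0 →
      ∃ p ∈ S h, i ≤ p.1 ∧ p.2 ≤ j := by
  intro d
  induction d with
  | zero =>
    intro i j hle hij _
    exfalso
    have := Fin.lt_def.mp hij
    omega
  | succ d ih =>
    intro i j hle hij hneg
    by_cases hz : ∀ k : Fin n, i < k → k < j → h k = 0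
    · exact ⟨(i, j), ⟨hij, hneg, hz⟩, le_refl _, le_refl _⟩
    · push_neg at hz
      obtain ⟨k, hik, hkj, hk⟩ := hz
      have hik' : (i : ℕ) < (k : ℕ) := hik
      have hkj' : (k : ℕ) < (j : ℕ) := hkj
      by_cases h1 : h i * h k < 0
      · obtain ⟨p, hp, hip, hpk⟩ := ih i k (by omega) hik h1
        exact ⟨p, hp, hip, le_trans hpk hkj.le⟩
      · push_neg at h1
        have h2 : h k * h j < 0 := by
          rcases h1.lt_or_eq with h1' | h1'
          · by_contra hcon
            push_neg at hcon
            have hk2 : 0 < h k ^ 2 := by positivity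
            nlinarith [mul_nonneg h1'.le hcon, mul_neg_of_pos_of_neg hk2 hneg]
          · have hi0 : h i ≠ 0 := fun hi => by simp [hi] at hneg
            have : h k = 0 := by
              rcases mul_eq_zero.mp h1'.symm with hc | hc
              · exact absurd hc hi0
              · exact hc
            exact absurd this hk
        obtain ⟨p, hp, hkp, hpj⟩ := ih k j (by omega) hkj h2
        exact ⟨p, hp, le_trans hik.le hkp, hpj⟩

end SignChangesAux

open SignChangesAux in
/-- If `ch(h) < g`, there is a real polynomial `F` of degree `< g` with
`F(x i) ≠ 0` and `h i * F(x i) ≥ 0` for all `i`. -/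
theorem exists_polynomial_of_signChanges_lt (g n : ℕ) (hg : 1 ≤ g)
    (x : Fin n → ℝ) (hx : StrictMono x)
    (h : Fin n → ℝ) (hch : signChanges h < g) :
    ∃ F : Polynomial ℝ, F.degree < g ∧
      ∀ i, F.eval (x i) ≠ 0 ∧ 0 ≤ h i * F.eval (x i) := by
  induction g using Nat.strong_induction_on generalizing h with
  | _ g IH =>
  have hfin : (S h).Finite := Set.toFinite _
  by_cases hS : S h = ∅
  · -- no sign changes: all nonzero entries have the same sign
    have key : ∀ i j : Fin n, ¬ (h i * h j < 0) := by
      intro i j hij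
      rcases lt_trichotomy i j with hlt | heq | hgt
      · obtain ⟨p, hp, -⟩ := exists_pair h n i j (by omega) hlt hij
        simp [hS] at hp
      · rw [heq] at hij; nlinarith
      · obtain ⟨p, hp, -⟩ := exists_pair h n j i (by omega) hgt (by linarith [mul_comm (h i) (h j)] )
        simp [hS] at hp
    by_cases hneg : ∃ i, h i < 0
    · obtain ⟨i0, hi0⟩ := hneg
      refine ⟨Polynomial.C (-1), ?_, fun i => ?_⟩
      · calc (Polynomial.C (-1 : ℝ)).degree ≤ 0 := Polynomial.degree_C_le
          _ < (g : WithBot ℕ) := by exact_mod_cast Nat.cast_lt.mpr hg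
      · constructor
        · simp
        · simp only [Polynomial.eval_C]
          have : ¬ (h i * h i0 < 0) := key i i0
          nlinarith
    · push_neg at hneg
      refine ⟨Polynomial.C 1, ?_, fun i => ?_⟩
      · calc (Polynomial.C (1 : ℝ)).degree ≤ 0 := Polynomial.degree_C_le
          _ < (g : WithBot ℕ) := by exact_mod_cast Nat.cast_lt.mpr hg
      · constructor
        · simp
        · simp only [Polynomial.eval_C, mul_one]; exact hneg i
  · -- there is a sign change; pick the first one
    have hne : (S h).Nonempty := Set.nonempty_iff_ne_empty.mpr hS
    obtain ⟨p0, hp0, hp0min⟩ := Set.exists_min_image (S h) (fun p => (p.1 : ℕ)) hfin hne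
    obtain ⟨hp0lt, hp0neg, hp0z⟩ := hp0
    have hp01 : h p0.1 ≠ 0 := fun hc => by simp [hc] at hp0neg
    have hp02 : h p0.2 ≠ 0 := fun hc => by simp [hc] at hp0neg
    -- every other sign-change pair lies entirely to the right of p0
    have hdisj : ∀ q ∈ S h, q ≠ p0 → p0.2 ≤ q.1 := by
      intro q hq hqne
      obtain ⟨hqlt, hqneg, hqz⟩ := hq
      have hq1 : h q.1 ≠ 0 := fun hc => by simp [hc] at hqneg
      have hq2 : h q.2 ≠ 0 := fun hc => by simp [hc] at hqneg
      have hmin : (p0.1 : ℕ) ≤ (q.1 : ℕ) := hp0min q ⟨hqlt, hqneg, hqz⟩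
      rcases eq_or_lt_of_le hmin with heq | hlt
      · -- q.1 = p0.1
        have heq1 : q.1 = p0.1 := Fin.ext heq.symm
        rcases lt_trichotomy q.2 p0.2 with h2 | h2 | h2
        · exact absurd (hp0z q.2 (heq1 ▸ hqlt) h2) hq2
        · exact absurd (Prod.ext heq1 h2) hqne
        · exact absurd (hqz p0.2 (heq1.symm ▸ hp0lt) h2) hp02
      · -- p0.1 < q.1
        by_contra hc
        push_neg at hc
        exact absurd (hp0z q.1 (Fin.lt_def.mpr hlt) hc) hq1
    -- flip the sign of the tail of h
    set h' : Fin n → ℝ := fun i => if i ≤ p0.1 then h i else -h i with hh'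
    have hzero : ∀ i, h i = 0 ↔ h' i = 0 := by
      intro i; simp only [hh']; split <;> simp
    have hS' : S h' = S h \ {p0} := by
      ext q
      constructor
      · rintro ⟨hqlt, hqneg, hqz⟩
        have hq1 : h' q.1 ≠ 0 := fun hc => by simp [hc] at hqneg
        have hq2 : h' q.2 ≠ 0 := fun hc => by simp [hc] at hqneg
        have hz' : ∀ k : Fin n, q.1 < k → k < q.2 → h k = 0 :=
          fun k h1 h2 => (hzero k).mpr (hqz k h1 h2)
        by_cases hc1 : q.1 ≤ p0.1
        · by_cases hc2 : q.2 ≤ p0.1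
          · have hprod : h q.1 * h q.2 < 0 := by
              simpa only [hh', if_pos hc1, if_pos hc2] using hqneg
            refine ⟨⟨hqlt, hprod, hz'⟩, ?_⟩
            simp only [Set.mem_singleton_iff]
            intro hcc
            rw [hcc] at hc2
            exact absurd hc2 (not_le.mpr hp0lt)
          · -- q.1 ≤ p0.1 < q.2 : derive a contradiction
            exfalso
            push_neg at hc2
            have hprod : 0 < h q.1 * h q.2 := by
              have := hqneg
              simp only [hh', if_pos hc1, if_neg (not_le.mpr hc2), mul_neg] at this
              linarith
            have hq1' : q.1 = p0.1 := by
              rcases eq_or_lt_of_le hc1 with he | hl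
              · exact he
              · exact absurd (hz' p0.1 hl hc2) hp01
            have hq2' : q.2 = p0.2 := by
              rcases lt_trichotomy q.2 p0.2 with h2 | h2 | h2
              · exact absurd (hp0z q.2 (hq1' ▸ hqlt) h2) (fun hc => by
                  rw [hzero] at hc; exact absurd hc (by
                    intro hcc; simp [hcc] at hqneg))
              · exact h2
              · exact absurd (hz' p0.2 (hq1'.symm ▸ hp0lt) h2) hp02
            rw [hq1', hq2'] at hprod
            linarith
        · -- p0.1 < q.1, so both flipped
          push_neg at hc1
          have hc2 : ¬ q.2 ≤ p0.1 := not_le.mpr (lt_trans hc1 hqlt)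
          have hprod : h q.1 * h q.2 < 0 := by
            have := hqneg
            simp only [hh', if_neg (not_le.mpr hc1), if_neg hc2, neg_mul, mul_neg, neg_neg] at this
            exact this
          refine ⟨⟨hqlt, hprod, hz'⟩, ?_⟩
          simp only [Set.mem_singleton_iff]
          intro hc; exact absurd (hc ▸ hc1) (lt_irrefl _)
      · rintro ⟨⟨hqlt, hqneg, hqz⟩, hqne⟩
        simp only [Set.mem_singleton_iff] at hqne
        have hge : p0.2 ≤ q.1 := hdisj q ⟨hqlt, hqneg, hqz⟩ hqne
        have hc1 : ¬ q.1 ≤ p0.1 := not_le.mpr (lt_of_lt_of_le hp0lt hge)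
        have hc2 : ¬ q.2 ≤ p0.1 := not_le.mpr (lt_of_lt_of_le hp0lt (le_trans hge hqlt.le))
        refine ⟨hqlt, ?_, fun k h1 h2 => (hzero k).mp (hqz k h1 h2)⟩
        simp only [hh', if_neg hc1, if_neg hc2, neg_mul, mul_neg, neg_neg]
        exact hqneg
    have hcard : signChanges h' < signChanges h := by
      rw [signChanges_eq, signChanges_eq, hS']
      exact Set.ncard_diff_singleton_lt_of_mem (show p0 ∈ S h from ⟨hp0lt, hp0neg, hp0z⟩) hfin
    have hpos : 0 < signChanges h := by
      rw [signChanges_eq]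
      exact (Set.ncard_pos hfin).mpr hne
    have hg2 : 2 ≤ g := lt_of_le_of_lt hpos hch
    obtain ⟨F', hF'deg, hF'⟩ := IH (g - 1) (by omega) (by omega) h' (by omega)
    have hF'ne : F' ≠ 0 := by
      intro hc
      rcases hF' p0.1 with ⟨hne0, -⟩
      simp [hc] at hne0
    -- choose the root between x p0.1 and its successor
    have hjlt : (p0.1 : ℕ) + 1 < n := lt_of_le_of_lt (Fin.lt_def.mp hp0lt) p0.2.isLt
    set j : Fin n := ⟨(p0.1 : ℕ) + 1, hjlt⟩ with hj
    have hxj : x p0.1 < x j := hx (by simp [hj, Fin.lt_def])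
    set c : ℝ := (x p0.1 + x j) / 2 with hc
    have hc1 : x p0.1 < c := by simp only [hc]; linarith
    have hc2 : c < x j := by simp only [hc]; linarith
    refine ⟨F' * (Polynomial.C c - Polynomial.X), ?_, fun i => ?_⟩
    · have hlin : (Polynomial.C c - Polynomial.X : Polynomial ℝ) ≠ 0 := by
        intro hcc
        have := Polynomial.natDegree_X_sub_C c
        rw [show Polynomial.X - Polynomial.C c = -(Polynomial.C c - Polynomial.X) by ring, hcc] at this
        simp at this
      have hFne : F' * (Polynomial.C c - Polynomial.X) ≠ 0 := mul_ne_zero hF'ne hlin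
      rw [← Polynomial.natDegree_lt_iff_degree_lt hFne]
      have hnd : (F' * (Polynomial.C c - Polynomial.X)).natDegree = F'.natDegree + 1 := by
        rw [Polynomial.natDegree_mul hF'ne hlin]
        congr 1
        rw [show Polynomial.C c - Polynomial.X = -(Polynomial.X - Polynomial.C c) by ring,
          Polynomial.natDegree_neg, Polynomial.natDegree_X_sub_C]
      have hF'nd : F'.natDegree < g - 1 := (Polynomial.natDegree_lt_iff_degree_lt hF'ne).mpr hF'deg
      omega
    · have heval : (F' * (Polynomial.C c - Polynomial.X)).eval (x i) =
        F'.eval (x i) * (c - x i) := by simp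
      rcases hF' i with ⟨hne0, hpos0⟩
      by_cases hi : i ≤ p0.1
      · have hxi : x i ≤ x p0.1 := hx.monotone hi
        have hcx : 0 < c - x i := by linarith
        constructor
        · rw [heval]; exact mul_ne_zero hne0 (ne_of_gt hcx)
        · rw [heval]
          have : h' i = h i := by simp [hh', hi]
          rw [this] at hpos0
          nlinarith
      · push_neg at hi
        have hji : j ≤ i := by
          simp only [hj, Fin.le_def]
          exact Fin.lt_def.mp hi
        have hxi : x j ≤ x i := hx.monotone hji
        have hcx : c - x i < 0 := by linarith
        constructor
        · rw [heval]; exact mul_ne_zero hne0 (ne_of_lt hcx)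
        · rw [heval]
          have : h' i = -h i := by simp [hh', not_le.mpr hi]
          rw [this] at hpos0
          nlinarith
end

section
/- Let g ≥ 1 and let x_1,…,x_n be real numbers, not necessarily distinct. For x ∈ ℝ set I(x) = {i ∈ {1,…,n} : x_i = x}. Let h = (h_1,…,h_n) be a real solution of the dual Vandermonde system ∑_{i=1}^n x_i^k h_i = 0 (k = 0,…,g−1) such that h_i ≠ 0 for all i = 1,…,n. Then at least one of the following holds: (i) ∑_{i ∈ I(x)} h_i = 0 for every x ∈ ℝ; or (ii) the sequence (h_1,…,h_n) contains at least ⌊(g+1)/2⌋ positive members and at least ⌊(g+1)/2⌋ negative members. -/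
/-!
Push `h` forward along `x` to the fibre sums `H t = ∑_{x i = t} h i`; the system says that
`∑_t p(t) H(t) = 0` for every polynomial `p` of degree `< g`. If `H` had fewer than
`⌊(g+1)/2⌋` negative values, the square `p = ∏_{H u < 0} (X - u)²` would be admissible, and
`∑_t p(t) H(t) = 0`, a sum of nonnegative terms, forces `H ≤ 0`; then `p = 1` forces `H = 0`.
Every fibre with `H t < 0` contains a negative `h i`, and `-h` gives the positive count.
-/

open Polynomial Finset

theorem Finset.sum_eval_mul_eq_zero_of_sum_pow_mul_eq_zero {ι R : Type*} [CommSemiring R]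
    {s : Finset ι} {x h : ι → R} {g : ℕ} (hsys : ∀ k < g, ∑ i ∈ s, x i ^ k * h i = 0)
    {p : R[X]} (hp : p.natDegree < g) :
    ∑ i ∈ s, p.eval (x i) * h i = 0 := by
  simp_rw [eval_eq_sum_range' hp, sum_mul, mul_assoc]
  rw [sum_comm]
  refine sum_eq_zero fun k hk => ?_
  rw [← mul_sum, hsys k (mem_range.mp hk), mul_zero]

theorem Finset.sum_mul_eq_sum_image_mul_sum_fiber {ι α R : Type*} [DecidableEq α]
    [CommSemiring R] (s : Finset ι) (x : ι → α) (f : α → R) (h : ι → R) :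
    ∑ i ∈ s, f (x i) * h i = ∑ t ∈ s.image x, f t * ∑ i ∈ s with x i = t, h i := by
  rw [← sum_fiberwise_of_maps_to fun i hi => mem_image_of_mem x hi]
  refine sum_congr rfl fun t _ => ?_
  rw [mul_sum]
  exact sum_congr rfl fun i hi => by rw [(mem_filter.mp hi).2]

section OrderedField

variable {K : Type*} [Field K] [LinearOrder K] [IsStrictOrderedRing K]

theorem le_card_filter_neg_of_sum_eval_mul_eq_zero {g : ℕ} {S : Finset K} {w : K → K}
    (hmom : ∀ p : K[X], p.natDegree < g → ∑ t ∈ S, p.eval t * w t = 0)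
    (hw : ∃ t ∈ S, w t ≠ 0) :
    (g + 1) / 2 ≤ #{t ∈ S | w t < 0} := by
  by_contra! hlt
  set N := {t ∈ S | w t < 0}
  set p : K[X] := ∏ u ∈ N, (X - C u) ^ 2
  have hp_deg : p.natDegree < g := by
    rw [natDegree_prod_of_monic _ _ fun u _ => (monic_X_sub_C u).pow 2]
    simp only [natDegree_pow, natDegree_X_sub_C, sum_const, smul_eq_mul]
    omega
  have hp_eval (t : K) : p.eval t = ∏ u ∈ N, (t - u) ^ 2 := by
    simp [p, eval_prod]
  have hterm_nonneg : ∀ t ∈ S, 0 ≤ p.eval t * w t := by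
    intro t ht
    rcases lt_or_ge (w t) 0 with hneg | hnonneg
    · rw [hp_eval, prod_eq_zero (mem_filter.mpr ⟨ht, hneg⟩) (by ring), zero_mul]
    · exact mul_nonneg (hp_eval t ▸ prod_nonneg fun _ _ => sq_nonneg _) hnonneg
  have hterm_zero := (sum_eq_zero_iff_of_nonneg hterm_nonneg).mp (hmom p hp_deg)
  have hw_nonpos : ∀ t ∈ S, w t ≤ 0 := by
    intro t ht
    by_contra! hpos
    have hp_pos : 0 < p.eval t := by
      rw [hp_eval]
      refine prod_pos fun u hu => pow_two_pos_of_ne_zero (sub_ne_zero.mpr ?_)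
      rintro rfl
      exact (mem_filter.mp hu).2.not_gt hpos
    exact (mul_pos hp_pos hpos).ne' (hterm_zero t ht)
  have hw_zero := (sum_eq_zero_iff_of_nonpos hw_nonpos).mp
    (by simpa using hmom 1 (by rw [natDegree_one]; omega))
  obtain ⟨t, ht, hwt⟩ := hw
  exact hwt (hw_zero t ht)

theorem le_card_filter_neg_of_sum_fiber_ne_zero {ι : Type*} [Fintype ι] {g : ℕ}
    {x h : ι → K} (hsys : ∀ k < g, ∑ i, x i ^ k * h i = 0) {t₀ : K}
    (ht₀ : ∑ i with x i = t₀, h i ≠ 0) :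
    (g + 1) / 2 ≤ #{i | h i < 0} := by
  set H : K → K := fun t => ∑ i with x i = t, h i
  have hmom (p : K[X]) (hp : p.natDegree < g) : ∑ t ∈ univ.image x, p.eval t * H t = 0 := by
    rw [← sum_mul_eq_sum_image_mul_sum_fiber]
    exact sum_eval_mul_eq_zero_of_sum_pow_mul_eq_zero hsys hp
  have ht₀_mem : t₀ ∈ univ.image x := by
    obtain ⟨i, hi, -⟩ := exists_ne_zero_of_sum_ne_zero ht₀
    exact mem_image.mpr ⟨i, mem_univ i, (mem_filter.mp hi).2⟩
  have hneg_sub : {t ∈ univ.image x | H t < 0} ⊆ ({i | h i < 0} : Finset ι).image x := by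
    intro t ht
    obtain ⟨i, hi, hhi⟩ :=
      exists_lt_of_sum_lt ((mem_filter.mp ht).2.trans_eq sum_const_zero.symm)
    exact mem_image.mpr ⟨i, mem_filter.mpr ⟨mem_univ i, hhi⟩, (mem_filter.mp hi).2⟩
  calc (g + 1) / 2 ≤ #{t ∈ univ.image x | H t < 0} :=
        le_card_filter_neg_of_sum_eval_mul_eq_zero hmom ⟨t₀, ht₀_mem, ht₀⟩
    _ ≤ #(({i | h i < 0} : Finset ι).image x) := card_le_card hneg_sub
    _ ≤ #{i | h i < 0} := card_image_le

end OrderedField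

theorem fiber_sums_zero_or_many_signs_general (g n : ℕ)
    (x : Fin n → ℝ) (h : Fin n → ℝ)
    (hsys : ∀ k, k < g → ∑ i, x i ^ k * h i = 0) :
    (∀ t : ℝ, ∑ i ∈ Finset.univ.filter (fun i => x i = t), h i = 0) ∨
    ((g + 1) / 2 ≤ (Finset.univ.filter (fun i => 0 < h i)).card ∧
     (g + 1) / 2 ≤ (Finset.univ.filter (fun i => h i < 0)).card) := by
  refine or_iff_not_imp_left.mpr fun hall => ?_
  obtain ⟨t₀, ht₀⟩ := not_forall.mp hall
  have hpos := le_card_filter_neg_of_sum_fiber_ne_zero (h := -h) (t₀ := t₀)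
    (by simpa using hsys) (by simpa using ht₀)
  simp only [Pi.neg_apply, neg_lt_zero] at hpos
  exact ⟨hpos, le_card_filter_neg_of_sum_fiber_ne_zero hsys ht₀⟩

/-- Corollary: a nowhere-zero solution of the dual Vandermonde system (with possibly
repeated nodes `x i`) either has all its "fiber sums" `∑_{x i = t} h i` equal to zero,
or has at least `⌊(g+1)/2⌋` positive and at least `⌊(g+1)/2⌋` negative entries. -/
theorem fiber_sums_zero_or_many_signs (g n : ℕ) (hg : 1 ≤ g)
    (x : Fin n → ℝ) (h : Fin n → ℝ)
    (hsys : ∀ k, k < g → ∑ i, x i ^ k * h i = 0)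
    (hnz : ∀ i, h i ≠ 0) :
    (∀ t : ℝ, ∑ i ∈ Finset.univ.filter (fun i => x i = t), h i = 0) ∨
    ((g + 1) / 2 ≤ (Finset.univ.filter (fun i => 0 < h i)).card ∧
     (g + 1) / 2 ≤ (Finset.univ.filter (fun i => h i < 0)).card) :=
  fiber_sums_zero_or_many_signs_general g n x h hsys
end
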